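/- Let W : A → B be a strict 2-functor between strict bicategories which is locally fully faithful, i.e., for all objects x, y of A the induced functor from the hom-category (x ⟶ y) to the hom-category (W.obj x ⟶ W.obj y), given on objects by W.map and on morphisms by W.map₂, is fully faithful. Let f : b ⟶ a, g : c ⟶ a, and r : c ⟶ b be 1-cells of A and ρ : r ≫ f ⟶ g a 2-cell of A. If (W.map r, W.map₂ ρ) is an absolute right lifting of W.map g through W.map f in B (where W.map₂ ρ is regarded as a 2-cell W.map r ≫ W.map f ⟶ W.map g via the strictness equality W.map (r ≫ f) = W.map r ≫ W.map f), then (r, ρ) is an absolute right lifting of g through f in A. That is, locally fully faithful strict 2-functors reflect absolute right lifting diagrams. -/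

import Mathlib

open CategoryTheory Bicategory

universe w₁ w₂ w₃ v₁ v₂ v₃ u₁ u₂ u₃

/-- A strict 2-functor between strict bicategories is a pseudofunctor which preserves
identity 1-cells and composition of 1-cells strictly, and whose coherence isomorphisms
are the `eqToIso`s of these equalities. -/
structure StrictTwoFunctor (B : Type u₁) (A : Type u₂) [Bicategory.{w₁, v₁} B]
    [Bicategory.{w₂, v₂} A] [Bicategory.Strict B] [Bicategory.Strict A] extends
    CategoryTheory.Pseudofunctor B A where
  map_id' : ∀ x : B, toPseudofunctor.map (𝟙 x) = 𝟙 (toPseudofunctor.obj x)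
  map_comp' : ∀ {x y z : B} (f : x ⟶ y) (g : y ⟶ z),
    toPseudofunctor.map (f ≫ g) = toPseudofunctor.map f ≫ toPseudofunctor.map g
  mapId_eq : ∀ x : B, toPseudofunctor.mapId x = eqToIso (map_id' x)
  mapComp_eq : ∀ {x y z : B} (f : x ⟶ y) (g : y ⟶ z),
    toPseudofunctor.mapComp f g = eqToIso (map_comp' f g)

namespace StrictTwoFunctor

variable {B : Type u₁} {A : Type u₂} {C : Type u₃} [Bicategory.{w₁, v₁} B]
  [Bicategory.{w₂, v₂} A] [Bicategory.{w₃, v₃} C]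
  [Bicategory.Strict B] [Bicategory.Strict A] [Bicategory.Strict C]

theorem map₂_eqToHom (F : StrictTwoFunctor B A) {x y : B} {f g : x ⟶ y} (h : f = g) :
    F.map₂ (eqToHom h) = eqToHom (congrArg F.map h) := by
  subst h; simp

/-- The identity strict 2-functor. -/
def id (B : Type u₁) [Bicategory.{w₁, v₁} B] [Bicategory.Strict B] :
    StrictTwoFunctor B B where
  toPseudofunctor := Pseudofunctor.id B
  map_id' _ := rfl
  map_comp' _ _ := rfl
  mapId_eq _ := by aesop_cat
  mapComp_eq _ _ := by aesop_cat

/-- Composition of strict 2-functors. -/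
def comp (F : StrictTwoFunctor B A) (G : StrictTwoFunctor A C) : StrictTwoFunctor B C where
  toPseudofunctor := F.toPseudofunctor.comp G.toPseudofunctor
  map_id' x := by
    exact (congrArg G.map (F.map_id' x)).trans (G.map_id' _)
  map_comp' f g := by
    exact (congrArg G.map (F.map_comp' f g)).trans (G.map_comp' _ _)
  mapId_eq x := by
    ext
    simp [Pseudofunctor.comp, F.mapId_eq, G.mapId_eq, PrelaxFunctor.map₂Iso_eqToIso]
    erw [eqToIso_trans]
  mapComp_eq f g := by
    ext
    simp [Pseudofunctor.comp, F.mapComp_eq, G.mapComp_eq, PrelaxFunctor.map₂Iso_eqToIso]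
    erw [eqToIso_trans]

end StrictTwoFunctor

/-- A 2-natural transformation between strict 2-functors. -/
structure TwoNatTrans {B : Type u₁} {A : Type u₂} [Bicategory.{w₁, v₁} B]
    [Bicategory.{w₂, v₂} A] [Bicategory.Strict B] [Bicategory.Strict A]
    (F G : StrictTwoFunctor B A) where
  app : ∀ x : B, F.obj x ⟶ G.obj x
  naturality : ∀ {x y : B} (f : x ⟶ y), F.map f ≫ app y = app x ≫ G.map f
  naturality₂ : ∀ {x y : B} {f g : x ⟶ y} (θ : f ⟶ g),
    (F.map₂ θ ▷ app y) ≫ eqToHom (naturality g) = eqToHom (naturality f) ≫ (app x ◁ G.map₂ θ)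

/-- In a strict bicategory `K`, the pair `(r, ρ)` is an absolute right lifting of `g` through
`f` if every 2-cell `χ : b' ≫ f ⟶ c' ≫ g` factors uniquely through `ρ`. -/
def IsAbsoluteRightLifting {K : Type u₁} [Bicategory.{w₁, v₁} K] [Bicategory.Strict K]
    {a b c : K} (f : b ⟶ a) (g : c ⟶ a) (r : c ⟶ b) (ρ : r ≫ f ⟶ g) : Prop :=
  ∀ (x : K) (b' : x ⟶ b) (c' : x ⟶ c) (χ : b' ≫ f ⟶ c' ≫ g),
    ∃! ζ : b' ⟶ c' ≫ r,
      χ = (ζ ▷ f) ≫ eqToHom (Bicategory.Strict.assoc c' r f) ≫ (c' ◁ ρ)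

variable {A : Type u₁} {B : Type u₂} [Bicategory.{w₁, v₁} A] [Bicategory.{w₂, v₂} B]
  [Bicategory.Strict A] [Bicategory.Strict B]

/-!
A locally fully faithful strict 2-functor is bijective on 2-cells, also after conjugating with
the strictness equalities `W.map (u ≫ v) = W.map u ≫ W.map v`, and it sends the composite `(ζ ▷ f) ≫ (c' ◁ ρ)` to `(W.map₂ ζ ▷ W.map f) ≫ (W.map c' ◁ W.map₂ ρ)`,
so factorizations of `χ` through `ρ` correspond bijectively to factorizations of the image of
`χ` through the image of `ρ`, and uniqueness of the latter gives uniqueness of the former.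
-/

namespace StrictTwoFunctor

variable (W : StrictTwoFunctor A B)

theorem map₂_whiskerLeft {x y z : A} (h : x ⟶ y) {f g : y ⟶ z} (η : f ⟶ g) :
    W.map₂ (h ◁ η) =
      eqToHom (W.map_comp' h f) ≫ (W.map h ◁ W.map₂ η) ≫ eqToHom (W.map_comp' h g).symm := by
  simp [W.mapComp_eq]

theorem map₂_whiskerRight {x y z : A} {f g : x ⟶ y} (η : f ⟶ g) (h : y ⟶ z) :
    W.map₂ (η ▷ h) =
      eqToHom (W.map_comp' f h) ≫ (W.map₂ η ▷ W.map h) ≫ eqToHom (W.map_comp' g h).symm := by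
  simp [W.mapComp_eq]

theorem map₂_lifting_factorization {a b c x : A} (f : b ⟶ a) (g : c ⟶ a) (r : c ⟶ b)
    (ρ : r ≫ f ⟶ g) (b' : x ⟶ b) (c' : x ⟶ c) (ζ : b' ⟶ c' ≫ r) :
    eqToHom (W.map_comp' b' f).symm ≫
        W.map₂ ((ζ ▷ f) ≫ eqToHom (Strict.assoc c' r f) ≫ (c' ◁ ρ)) ≫
          eqToHom (W.map_comp' c' g) =
      ((W.map₂ ζ ≫ eqToHom (W.map_comp' c' r)) ▷ W.map f) ≫
        eqToHom (Strict.assoc (W.map c') (W.map r) (W.map f)) ≫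
          (W.map c' ◁ (eqToHom (W.map_comp' r f).symm ≫ W.map₂ ρ)) := by
  simp only [PrelaxFunctor.map₂_comp, map₂_whiskerLeft, map₂_whiskerRight, map₂_eqToHom]
  simp

section LocallyFullyFaithful

variable {x y : A} [(W.mapFunctor x y).Full] [(W.mapFunctor x y).Faithful]

noncomputable def map₂EqToHomEquiv {f g : x ⟶ y} {f' g' : W.obj x ⟶ W.obj y}
    (hf : W.map f = f') (hg : W.map g = g') : (f ⟶ g) ≃ (f' ⟶ g') :=
  (Functor.FullyFaithful.ofFullyFaithful (W.mapFunctor x y)).homEquiv.trans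
    ((eqToIso hf).homCongr (eqToIso hg))

theorem map₂EqToHomEquiv_apply {f g : x ⟶ y} {f' g' : W.obj x ⟶ W.obj y}
    (hf : W.map f = f') (hg : W.map g = g') (η : f ⟶ g) :
    W.map₂EqToHomEquiv hf hg η = eqToHom hf.symm ≫ W.map₂ η ≫ eqToHom hg :=
  rfl

end LocallyFullyFaithful

end StrictTwoFunctor

/-- Locally fully faithful strict 2-functors reflect absolute right lifting diagrams:
if each functor between hom-categories induced by `W` is fully faithful and
`(W.map r, W.map₂ ρ)` is an absolute right lifting of `W.map g` through `W.map f` in `B`,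
then `(r, ρ)` is an absolute right lifting of `g` through `f` in `A`. -/
theorem locallyFullyFaithful_reflects_absoluteRightLifting (W : StrictTwoFunctor A B)
    (hfull : ∀ x y : A, (W.mapFunctor x y).Full)
    (hfaithful : ∀ x y : A, (W.mapFunctor x y).Faithful)
    {a b c : A} (f : b ⟶ a) (g : c ⟶ a) (r : c ⟶ b) (ρ : r ≫ f ⟶ g)
    (h : IsAbsoluteRightLifting (W.map f) (W.map g) (W.map r)
      (eqToHom (W.map_comp' r f).symm ≫ W.map₂ ρ)) :
    IsAbsoluteRightLifting f g r ρ := by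
  intro x b' c' χ
  let transport := W.map₂EqToHomEquiv (W.map_comp' b' f) (W.map_comp' c' g)
  have factorization_iff (ζ : b' ⟶ c' ≫ r) :
      χ = (ζ ▷ f) ≫ eqToHom (Strict.assoc c' r f) ≫ (c' ◁ ρ) ↔
        transport χ = (W.map₂EqToHomEquiv rfl (W.map_comp' c' r) ζ ▷ W.map f) ≫
          eqToHom (Strict.assoc (W.map c') (W.map r) (W.map f)) ≫
            (W.map c' ◁ (eqToHom (W.map_comp' r f).symm ≫ W.map₂ ρ)) := by
    rw [← transport.apply_eq_iff_eq, W.map₂EqToHomEquiv_apply, W.map₂EqToHomEquiv_apply,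
      W.map₂EqToHomEquiv_apply, W.map₂_lifting_factorization, eqToHom_refl, Category.id_comp]
  exact ((W.map₂EqToHomEquiv rfl (W.map_comp' c' r)).existsUnique_congr factorization_iff).2
    (h (W.obj x) (W.map b') (W.map c') (transport χ))
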